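/- Let d ∈ {1, 2}, α > 0, δ ∈ (d/2, 1), and let f_λ(z) = (z^(1-d/2)/π^(d/2)) ∫₀^∞ J_{d/2-1}(rz) r^(d/2) (1 + (r/(αλ))^δ)^(-λ) dr. Then for any increasing sequence λ_n → ∞ of naturals and any m, n, sup_{z>0} |f_{λ_m}(z) - f_{λ_n}(z)| ≤ (Γ(d/δ)/(δ π^(d/2) 2^(d/2-1) Γ(d/2))) · |α^d λ_m^(d - d/δ) Γ(λ_m - d/δ)λ_m^{d/δ}/Γ(λ_m) − α^d λ_n^(d - d/δ) Γ(λ_n - d/δ)λ_n^{d/δ}/Γ(λ_n)| (bounding the difference of the Hankel transforms by the difference of the Beta-integral values). -/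

import Mathlib

open Real MeasureTheory Set Filter

/-- Bessel function of the first kind of real order `ν`, via its power series. -/
noncomputable def besselJ (ν x : ℝ) : ℝ :=
  ∑' k : ℕ, (-1) ^ k / (k.factorial * Real.Gamma ((k : ℝ) + ν + 1)) * (x / 2) ^ (2 * (k : ℝ) + ν)

/-- The Hankel-transform spectral density of the reparameterized Generalized Cauchy model. -/
noncomputable def cauchySD (d : ℕ) (α δ : ℝ) (lam : ℝ) (z : ℝ) : ℝ :=
  z ^ (1 - (d : ℝ) / 2) / π ^ ((d : ℝ) / 2) *
    ∫ r in Ioi (0:ℝ), besselJ ((d : ℝ) / 2 - 1) (r * z) * r ^ ((d : ℝ) / 2) *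
      (1 + (r / (α * lam)) ^ δ) ^ (-lam)

/-!
For `d = 2` the interval `(d/2, 1)` is empty, so `d = 1`. There `J_{-1/2}(x) = √(2/(πx)) cos x`,
and `cauchySD 1 α δ λ z = √2/π ∫₀^∞ cos(rz) φ_λ(r) dr` with `φ_λ(r) = (1 + (r/(αλ))^δ)^(-λ)`.
Writing `φ_λ(r) = exp(-λ log(1 + c λ^(-δ)))` with `c = (r/α)^δ`, one checks that `φ_λ(r)`
decreases in `λ` when `δ ≤ 1`; hence for `λ ≤ μ` the cosine transforms differ by at most
`∫ (φ_λ - φ_μ)`. For `λ > 1/δ` the substitutions `u = r^δ`, `u = x/(1-x)` turn `∫ φ_λ` into a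
Beta integral, equal to `Γ(1/δ)/δ · αλΓ(λ - 1/δ)/Γ(λ)`.

The natural numbers `λ ∈ {0, 1}` need separate care: there `φ_λ(r) ≳ r^(-δ)` is too large for
`cos(rz) φ_λ(r)` to be Lebesgue integrable, so the Bochner integral is `0`, while the Beta-value
expression of the statement is `≤ 0`.
-/

lemma Real.Gamma_nat_add_half_mul_factorial (k : ℕ) :
    Gamma (k + 1 / 2) * k.factorial * 4 ^ k = (2 * k).factorial * √π := by
  have h := Real.Gamma_mul_Gamma_add_half (k + 1 / 2)
  rw [show (k : ℝ) + 1 / 2 + 1 / 2 = k + 1 by ring, show 2 * ((k : ℝ) + 1 / 2) = (2 * k : ℕ) + 1 by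
    push_cast; ring, show (1 : ℝ) - ((2 * k : ℕ) + 1) = -(2 * k : ℕ) by ring,
    Real.Gamma_nat_eq_factorial, Real.Gamma_nat_eq_factorial, Real.rpow_neg zero_le_two,
    Real.rpow_natCast, pow_mul] at h
  rw [h]
  field_simp
  norm_num

lemma besselJ_neg_half {x : ℝ} (hx : 0 < x) :
    besselJ (-(1 / 2)) x = √(2 / (π * x)) * cos x := by
  have hterm (k : ℕ) : (-1) ^ k / (k.factorial * Gamma (k + -(1 / 2) + 1)) *
      (x / 2) ^ (2 * (k : ℝ) + -(1 / 2)) =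
        √(2 / (π * x)) * ((-1) ^ k * x ^ (2 * k) / (2 * k).factorial) := by
    rw [show (k : ℝ) + -(1 / 2) + 1 = k + 1 / 2 by ring, Real.rpow_add (by positivity),
      show 2 * (k : ℝ) = (2 * k : ℕ) by push_cast; ring, Real.rpow_natCast,
      Real.rpow_neg (by positivity), ← Real.sqrt_eq_rpow, Real.sqrt_div' _ (by positivity),
      Real.sqrt_div' _ (by positivity), Real.sqrt_mul' _ hx.le, div_pow, pow_mul]
    field_simp
    rw [show ((k : ℝ) * 2 + 1) / 2 = k + 1 / 2 by ring, pow_mul]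
    linear_combination -Real.Gamma_nat_add_half_mul_factorial k
  rw [besselJ, tsum_congr hterm, tsum_mul_left, ← Real.cos_eq_tsum]

section Beta

variable {a b : ℝ}

lemma Complex.ofReal_rpow_mul_one_sub_rpow {x : ℝ} (hx : x ∈ Ioo (0 : ℝ) 1) :
    ((x ^ (a - 1) * (1 - x) ^ (b - 1) : ℝ) : ℂ) =
      (x : ℂ) ^ ((a : ℂ) - 1) * (1 - (x : ℂ)) ^ ((b : ℂ) - 1) := by
  push_cast [Complex.ofReal_cpow hx.1.le, Complex.ofReal_cpow (sub_nonneg.2 hx.2.le)]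
  rfl

lemma Real.integrableOn_rpow_mul_one_sub_rpow (ha : 0 < a) (hb : 0 < b) :
    IntegrableOn (fun x : ℝ => x ^ (a - 1) * (1 - x) ^ (b - 1)) (Ioo 0 1) := by
  have h := Complex.betaIntegral_convergent (u := a) (v := b) (by simpa) (by simpa)
  rw [intervalIntegrable_iff_integrableOn_Ioo_of_le zero_le_one] at h
  refine IntegrableOn.congr_fun (Integrable.re h) (fun x hx => ?_) measurableSet_Ioo
  simp [← Complex.ofReal_rpow_mul_one_sub_rpow hx]

lemma Real.integral_rpow_mul_one_sub_rpow (ha : 0 < a) (hb : 0 < b) :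
    ∫ x in Ioo (0 : ℝ) 1, x ^ (a - 1) * (1 - x) ^ (b - 1) = Gamma a * Gamma b / Gamma (a + b) := by
  have h := Complex.betaIntegral_convergent (u := a) (v := b) (by simpa) (by simpa)
  rw [intervalIntegrable_iff_integrableOn_Ioo_of_le zero_le_one] at h
  rw [← ProbabilityTheory.beta, ProbabilityTheory.beta_eq_betaIntegralReal a b ha hb,
    Complex.betaIntegral, intervalIntegral.integral_of_le zero_le_one,
    integral_Ioc_eq_integral_Ioo, ← RCLike.re_to_complex, ← integral_re h]
  refine setIntegral_congr_fun measurableSet_Ioo fun x hx => ?_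
  simp [← Complex.ofReal_rpow_mul_one_sub_rpow hx]

lemma image_div_one_sub_Ioo : (fun x : ℝ => x / (1 - x)) '' Ioo 0 1 = Ioi 0 := by
  refine Subset.antisymm (image_subset_iff.2 fun x hx => div_pos hx.1 (sub_pos.2 hx.2))
    fun u (hu : 0 < u) =>
      ⟨u / (1 + u), ⟨by positivity, (div_lt_one (by positivity)).2 (by linarith)⟩, ?_⟩
  field_simp
  ring

lemma injOn_div_one_sub_Ioo : InjOn (fun x : ℝ => x / (1 - x)) (Ioo 0 1) := by
  intro x hx y hy hxy
  have := (sub_pos.2 hx.2).ne'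
  have := (sub_pos.2 hy.2).ne'
  field_simp at hxy
  linarith

lemma hasDerivAt_div_one_sub {x : ℝ} (hx : x ≠ 1) :
    HasDerivAt (fun x : ℝ => x / (1 - x)) (1 / (1 - x) ^ 2) x :=
  ((hasDerivAt_id' x).div ((hasDerivAt_const x (1 : ℝ)).sub (hasDerivAt_id' x))
    (sub_ne_zero.2 hx.symm)).congr_deriv (by simp only [Pi.sub_apply]; ring)

lemma abs_deriv_smul_rpow_mul_one_add_rpow {x : ℝ} (hx : x ∈ Ioo (0 : ℝ) 1) :
    |1 / (1 - x) ^ 2| • ((x / (1 - x)) ^ (a - 1) * (1 + x / (1 - x)) ^ (-(a + b))) =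
      x ^ (a - 1) * (1 - x) ^ (b - 1) := by
  have h1x : 0 < 1 - x := sub_pos.2 hx.2
  rw [smul_eq_mul, abs_of_pos (by positivity), show 1 + x / (1 - x) = (1 - x)⁻¹ by field_simp; ring,
    Real.inv_rpow h1x.le, Real.rpow_neg (by positivity), inv_inv, Real.div_rpow hx.1.le h1x.le]
  have h2 : (1 - x) ^ (a + b) = (1 - x) ^ (2 : ℝ) * (1 - x) ^ (a - 1) * (1 - x) ^ (b - 1) := by
    rw [← Real.rpow_add h1x, ← Real.rpow_add h1x]
    ring_nf
  rw [h2, Real.rpow_two]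
  field_simp

lemma integrableOn_rpow_mul_one_add_rpow (ha : 0 < a) (hb : 0 < b) :
    IntegrableOn (fun u : ℝ => u ^ (a - 1) * (1 + u) ^ (-(a + b))) (Ioi 0) := by
  rw [← image_div_one_sub_Ioo, integrableOn_image_iff_integrableOn_abs_deriv_smul measurableSet_Ioo
    (fun x hx => (hasDerivAt_div_one_sub hx.2.ne).hasDerivWithinAt) injOn_div_one_sub_Ioo]
  exact (Real.integrableOn_rpow_mul_one_sub_rpow ha hb).congr_fun
    (fun x hx => (abs_deriv_smul_rpow_mul_one_add_rpow hx).symm) measurableSet_Ioo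

lemma integral_rpow_mul_one_add_rpow (ha : 0 < a) (hb : 0 < b) :
    ∫ u in Ioi (0 : ℝ), u ^ (a - 1) * (1 + u) ^ (-(a + b)) = Gamma a * Gamma b / Gamma (a + b) := by
  rw [← image_div_one_sub_Ioo, integral_image_eq_integral_abs_deriv_smul measurableSet_Ioo
    (fun x hx => (hasDerivAt_div_one_sub hx.2.ne).hasDerivWithinAt) injOn_div_one_sub_Ioo,
    setIntegral_congr_fun measurableSet_Ioo fun x hx => abs_deriv_smul_rpow_mul_one_add_rpow hx]
  exact Real.integral_rpow_mul_one_sub_rpow ha hb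

end Beta

section OneAddRpow

variable {δ lam : ℝ}

lemma mul_rpow_sub_one_mul_rpow_rpow_one_div_sub_one {x : ℝ} (hδ : 0 < δ) (hx : 0 < x) :
    δ * x ^ (δ - 1) * (x ^ δ) ^ (1 / δ - 1) = δ := by
  rw [← Real.rpow_mul hx.le, mul_assoc, ← Real.rpow_add hx]
  field_simp
  simp

lemma integrableOn_one_add_rpow_rpow_neg (hδ : 0 < δ) (hlam : 1 / δ < lam) :
    IntegrableOn (fun r : ℝ => (1 + r ^ δ) ^ (-lam)) (Ioi 0) := by
  have h := (integrableOn_Ioi_comp_rpow_iff _ hδ.ne').2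
    (integrableOn_rpow_mul_one_add_rpow (a := 1 / δ) (b := lam - 1 / δ) (by positivity)
      (by linarith))
  refine IntegrableOn.congr_fun (Integrable.div_const h δ) (fun x (hx : 0 < x) => ?_)
    measurableSet_Ioi
  rw [smul_eq_mul, abs_of_pos hδ, ← mul_assoc, mul_rpow_sub_one_mul_rpow_rpow_one_div_sub_one hδ hx,
    add_sub_cancel]
  field_simp

lemma integral_one_add_rpow_rpow_neg (hδ : 0 < δ) (hlam : 1 / δ < lam) :
    ∫ r in Ioi (0 : ℝ), (1 + r ^ δ) ^ (-lam) =
      Gamma (1 / δ) * Gamma (lam - 1 / δ) / (δ * Gamma lam) := by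
  have h := integral_comp_rpow_Ioi_of_pos hδ
    (g := fun u : ℝ => u ^ (1 / δ - 1) * (1 + u) ^ (-(1 / δ + (lam - 1 / δ))))
  rw [integral_rpow_mul_one_add_rpow (by positivity) (by linarith), add_sub_cancel,
    setIntegral_congr_fun measurableSet_Ioi fun x (hx : 0 < x) => by
      rw [smul_eq_mul, ← mul_assoc, mul_rpow_sub_one_mul_rpow_rpow_one_div_sub_one hδ hx],
    integral_const_mul] at h
  rw [mul_comm δ, ← div_div, ← h, mul_div_cancel_left₀ _ hδ.ne']

lemma integrableOn_one_add_div_rpow_rpow_neg {c : ℝ} (hc : 0 < c) (hδ : 0 < δ)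
    (hlam : 1 / δ < lam) : IntegrableOn (fun r : ℝ => (1 + (r / c) ^ δ) ^ (-lam)) (Ioi 0) := by
  simp_rw [div_eq_inv_mul]
  exact (integrableOn_Ioi_comp_mul_left_iff (fun r => (1 + r ^ δ) ^ (-lam)) 0 (inv_pos.2 hc)).2
    (by simpa using integrableOn_one_add_rpow_rpow_neg hδ hlam)

lemma integral_one_add_div_rpow_rpow_neg {c : ℝ} (hc : 0 < c) :
    ∫ r in Ioi (0 : ℝ), (1 + (r / c) ^ δ) ^ (-lam) =
      c * ∫ r in Ioi (0 : ℝ), (1 + r ^ δ) ^ (-lam) := by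
  simp_rw [div_eq_inv_mul]
  rw [integral_comp_mul_left_Ioi (fun r => (1 + r ^ δ) ^ (-lam)) 0 (inv_pos.2 hc), mul_zero,
    inv_inv, smul_eq_mul]

end OneAddRpow

lemma Real.div_one_add_le_log_one_add {u : ℝ} (hu : 0 ≤ u) : u / (1 + u) ≤ log (1 + u) := by
  convert Real.one_sub_inv_le_log_of_pos (x := 1 + u) (by positivity) using 1
  field_simp
  ring

lemma monotoneOn_mul_log_one_add_mul_rpow_neg {c δ : ℝ} (hc : 0 ≤ c) (hδ : δ ≤ 1) :
    MonotoneOn (fun t : ℝ => t * log (1 + c * t ^ (-δ))) (Ioi 0) := by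
  have hderiv : ∀ t ∈ Ioi (0 : ℝ), HasDerivAt (fun t : ℝ => t * log (1 + c * t ^ (-δ)))
      (log (1 + c * t ^ (-δ)) - δ * (c * t ^ (-δ)) / (1 + c * t ^ (-δ))) t := by
    intro t (ht : 0 < t)
    have hu : 0 < 1 + c * t ^ (-δ) := by positivity
    refine ((hasDerivAt_id' t).mul (((hasDerivAt_rpow_const (p := -δ) (Or.inl ht.ne')).const_mul
      c).const_add 1 |>.log hu.ne')).congr_deriv ?_
    rw [show -δ - 1 = -δ + -1 by ring, Real.rpow_add ht, Real.rpow_neg_one]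
    field_simp
    ring
  refine monotoneOn_of_hasDerivWithinAt_nonneg (convex_Ioi 0)
    (fun t ht => (hderiv t ht).continuousAt.continuousWithinAt)
    (fun t ht => (hderiv t (interior_subset ht)).hasDerivWithinAt) fun t ht => ?_
  have hu : 0 ≤ c * t ^ (-δ) := by have : 0 < t := interior_subset ht; positivity
  have : δ * (c * t ^ (-δ)) / (1 + c * t ^ (-δ)) ≤ c * t ^ (-δ) / (1 + c * t ^ (-δ)) := by
    gcongr ?_ / _
    exact mul_le_of_le_one_left hu hδ
  linarith [Real.div_one_add_le_log_one_add hu]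

lemma integrableOn_Ioi_comp_add_right_iff {E : Type*} [NormedAddCommGroup E] {f : ℝ → E}
    (a s : ℝ) : IntegrableOn (fun r => f (r + s)) (Ioi a) ↔ IntegrableOn f (Ioi (a + s)) := by
  have h := (measurePreserving_add_right volume s).integrableOn_comp_preimage
    (measurableEmbedding_addRight s) (f := f) (s := Ioi (a + s))
  rwa [preimage_add_const_Ioi, add_sub_cancel_right] at h

lemma Real.one_le_abs_cos_add_abs_sin (x : ℝ) : 1 ≤ |cos x| + |sin x| := by
  have hc : cos x ^ 2 ≤ |cos x| := by
    rw [← sq_abs]; exact pow_le_of_le_one (abs_nonneg _) (abs_cos_le_one x) two_ne_zero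
  have hs : sin x ^ 2 ≤ |sin x| := by
    rw [← sq_abs]; exact pow_le_of_le_one (abs_nonneg _) (abs_sin_le_one x) two_ne_zero
  linarith [sin_sq_add_cos_sq x]

/-- Shifting by a quarter period `s` turns `cos` into `-sin`, and
`h (r + s) ≤ (|cos| + |sin|) h (r + s) ≤ |cos (rz)| h r + |cos ((r + s) z)| h (r + s)`. -/
lemma integrableOn_Ioi_of_integrableOn_cos_mul {h : ℝ → ℝ} {z : ℝ} (hz : 0 < z)
    (hanti : AntitoneOn h (Ioi 0)) (hpos : ∀ r ∈ Ioi (0 : ℝ), 0 ≤ h r)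
    (hint : IntegrableOn (fun r => cos (r * z) * h r) (Ioi 0)) :
    IntegrableOn h (Ioi (π / (2 * z))) := by
  set s := π / (2 * z) with hs_def
  have hsz : s * z = π / 2 := by rw [hs_def]; field_simp
  have hs : 0 < s := by positivity
  have hshift : IntegrableOn (fun r => cos ((r + s) * z) * h (r + s)) (Ioi 0) := by
    rw [integrableOn_Ioi_comp_add_right_iff (f := fun r => cos (r * z) * h r), zero_add]
    exact hint.mono_set (Ioi_subset_Ioi hs.le)
  have hanti_shift : AntitoneOn (fun r => h (r + s)) (Ioi 0) :=
    fun a (ha : 0 < a) b (hb : 0 < b) hab =>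
      hanti (show 0 < a + s by positivity) (show 0 < b + s by positivity) (by linarith)
  rw [← zero_add s, ← integrableOn_Ioi_comp_add_right_iff]
  refine Integrable.mono' (hint.norm.add hshift.norm)
    ((aemeasurable_restrict_of_antitoneOn measurableSet_Ioi hanti_shift).aestronglyMeasurable)
    ((ae_restrict_iff' measurableSet_Ioi).2 (Eventually.of_forall fun r (hr : 0 < r) => ?_))
  have hle : h (r + s) ≤ h r := hanti hr (show 0 < r + s by positivity) (by linarith)
  have h0 : 0 ≤ h (r + s) := hpos _ (show 0 < r + s by positivity)
  have hcos : cos ((r + s) * z) = -sin (r * z) := by rw [add_mul, hsz, cos_add_pi_div_two]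
  simp only [Pi.add_apply, norm_mul, Real.norm_eq_abs, hcos, abs_neg, abs_of_nonneg h0,
    abs_of_nonneg (hle.trans' h0)]
  nlinarith [Real.one_le_abs_cos_add_abs_sin (r * z), abs_nonneg (cos (r * z))]

lemma abs_integral_mul_sub_integral_mul_le {X : Type*} [MeasurableSpace X] {μ : Measure X}
    {f g h : X → ℝ} (hf : AEStronglyMeasurable f μ) (hf1 : ∀ x, |f x| ≤ 1) (hg : Integrable g μ)
    (hh : Integrable h μ) (hgh : g ≤ᵐ[μ] h) :
    |∫ x, f x * g x ∂μ - ∫ x, f x * h x ∂μ| ≤ ∫ x, h x ∂μ - ∫ x, g x ∂μ := by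
  have hbdd : ∀ᵐ x ∂μ, ‖f x‖ ≤ 1 := Eventually.of_forall hf1
  rw [← integral_sub (hg.bdd_mul hf hbdd) (hh.bdd_mul hf hbdd), ← integral_sub hh hg]
  refine (Real.norm_eq_abs _ ▸ norm_integral_le_of_norm_le (hh.sub hg) ?_)
  filter_upwards [hgh] with x hx
  rw [Real.norm_eq_abs, ← mul_sub, abs_mul, abs_of_nonpos (sub_nonpos.2 hx), neg_sub]
  exact mul_le_of_le_one_left (sub_nonneg.2 hx) (hf1 x)

noncomputable def genCauchy (α δ lam r : ℝ) : ℝ := (1 + (r / (α * lam)) ^ δ) ^ (-lam)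

noncomputable def genCauchyMass (α δ lam : ℝ) : ℝ :=
  α * lam ^ (1 - 1 / δ) * (Gamma (lam - 1 / δ) * lam ^ (1 / δ) / Gamma lam)

section GenCauchy

variable {α δ lam r z : ℝ}

lemma cauchySD_one (hz : 0 < z) :
    cauchySD 1 α δ lam z = √2 / π * ∫ r in Ioi 0, cos (r * z) * genCauchy α δ lam r := by
  have hkernel : ∀ r ∈ Ioi (0 : ℝ), besselJ ((1 : ℕ) / 2 - 1) (r * z) * r ^ ((1 : ℕ) / 2 : ℝ) *
      genCauchy α δ lam r = (√2 / √π / √z) * (cos (r * z) * genCauchy α δ lam r) := by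
    intro r (hr : 0 < r)
    rw [show ((1 : ℕ) : ℝ) / 2 - 1 = -(1 / 2) by norm_num, besselJ_neg_half (by positivity),
      Nat.cast_one, ← Real.sqrt_eq_rpow, Real.sqrt_div' _ (by positivity),
      Real.sqrt_mul' _ (by positivity), Real.sqrt_mul' _ hz.le]
    field_simp
  change _ * ∫ r in Ioi 0, _ * genCauchy α δ lam r = _
  rw [setIntegral_congr_fun measurableSet_Ioi hkernel, integral_const_mul, ← mul_assoc]
  congr 1
  rw [Nat.cast_one, show (1 : ℝ) - 1 / 2 = 1 / 2 by norm_num, ← Real.sqrt_eq_rpow,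
    ← Real.sqrt_eq_rpow]
  field_simp
  rw [Real.sq_sqrt Real.pi_pos.le]

lemma genCauchy_pos (hα : 0 ≤ α) (hlam : 0 ≤ lam) (hr : 0 ≤ r) : 0 < genCauchy α δ lam r := by
  unfold genCauchy
  positivity

lemma genCauchy_zero : genCauchy α δ 0 r = 1 := by
  simp [genCauchy]

lemma antitoneOn_genCauchy (hα : 0 ≤ α) (hδ : 0 ≤ δ) (hlam : 0 ≤ lam) :
    AntitoneOn (genCauchy α δ lam) (Ioi 0) := by
  intro a (ha : 0 < a) b (hb : 0 < b) hab
  exact Real.rpow_le_rpow_of_nonpos (by positivity) (by gcongr) (neg_nonpos.2 hlam)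

lemma genCauchy_eq_exp (hα : 0 < α) (hr : 0 ≤ r) (hlam : 0 < lam) :
    genCauchy α δ lam r = exp (-(lam * log (1 + (r / α) ^ δ * lam ^ (-δ)))) := by
  rw [genCauchy, ← div_div, Real.div_rpow (by positivity) hlam.le,
    Real.rpow_neg hlam.le, ← div_eq_mul_inv, Real.rpow_def_of_pos (by positivity)]
  ring_nf

lemma genCauchy_le_genCauchy_of_le {μ : ℝ} (hα : 0 < α) (hδ : δ ≤ 1) (hr : 0 ≤ r)
    (hlam : 0 < lam) (hμ : lam ≤ μ) : genCauchy α δ μ r ≤ genCauchy α δ lam r := by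
  have hμ0 : 0 < μ := hlam.trans_le hμ
  rw [genCauchy_eq_exp hα hr hlam, genCauchy_eq_exp hα hr hμ0, exp_le_exp, neg_le_neg_iff]
  exact monotoneOn_mul_log_one_add_mul_rpow_neg (by positivity) hδ hlam hμ0 hμ

lemma rpow_neg_div_le_genCauchy_one (hα : 0 < α) (hδ : 0 ≤ δ) (hr : 1 ≤ r) :
    r ^ (-δ) / (1 + α ^ (-δ)) ≤ genCauchy α δ 1 r := by
  have hrδ : 1 ≤ r ^ δ := Real.one_le_rpow hr hδ
  rw [genCauchy, mul_one, Real.rpow_neg_one, Real.div_rpow (by linarith) hα.le,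
    Real.rpow_neg (by linarith), Real.rpow_neg hα.le, div_eq_mul_inv, ← mul_inv,
    inv_le_inv₀ (by positivity) (by positivity), mul_add, mul_one, div_eq_mul_inv]
  linarith

lemma genCauchy_one_le_of_le_one (hα : 0 ≤ α) (hr : 0 ≤ r) {t : ℕ} (ht : t ≤ 1) :
    genCauchy α δ 1 r ≤ genCauchy α δ t r := by
  interval_cases t
  · rw [Nat.cast_zero, genCauchy_zero]
    exact Real.rpow_le_one_of_one_le_of_nonpos (le_add_of_nonneg_right (by positivity))
      (by norm_num)
  · rw [Nat.cast_one]

lemma integrableOn_genCauchy (hα : 0 < α) (hδ : 0 < δ) (hlam : 1 / δ < lam) :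
    IntegrableOn (genCauchy α δ lam) (Ioi 0) :=
  integrableOn_one_add_div_rpow_rpow_neg (mul_pos hα ((one_div_pos.2 hδ).trans hlam)) hδ hlam

lemma integral_genCauchy (hα : 0 < α) (hδ : 0 < δ) (hlam : 1 / δ < lam) :
    ∫ r in Ioi 0, genCauchy α δ lam r = Gamma (1 / δ) / δ * genCauchyMass α δ lam := by
  have hlam0 : 0 < lam := (one_div_pos.2 hδ).trans hlam
  have hmass : genCauchyMass α δ lam =
      α * (lam ^ (1 - 1 / δ) * lam ^ (1 / δ)) * Gamma (lam - 1 / δ) / Gamma lam := by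
    unfold genCauchyMass
    ring
  rw [hmass, ← Real.rpow_add hlam0, sub_add_cancel, Real.rpow_one]
  unfold genCauchy
  rw [integral_one_add_div_rpow_rpow_neg (by positivity), integral_one_add_rpow_rpow_neg hδ hlam]
  field_simp

lemma Real.Gamma_neg_of_neg_one_lt_of_neg {x : ℝ} (h1 : -1 < x) (h0 : x < 0) : Gamma x < 0 := by
  have h := Real.Gamma_pos_of_pos (show 0 < x + 1 by linarith)
  rw [Real.Gamma_add_one h0.ne] at h
  exact neg_of_mul_pos_right h h0.le

lemma genCauchyMass_nonpos (hα : 0 ≤ α) (hδ : δ ∈ Ioo (1 / 2) 1) {t : ℕ} (ht : t ≤ 1) :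
    genCauchyMass α δ t ≤ 0 := by
  obtain ⟨hδ1, hδ2⟩ := hδ
  have hinv : 1 < 1 / δ := by rw [lt_div_iff₀ (by linarith)]; linarith
  have hinv' : 1 / δ < 2 := by rw [div_lt_iff₀ (by linarith)]; linarith
  interval_cases t
  · simp [genCauchyMass]
  · simp only [genCauchyMass, Nat.cast_one, Real.one_rpow, mul_one, Real.Gamma_one, div_one]
    exact mul_nonpos_of_nonneg_of_nonpos hα
      (Real.Gamma_neg_of_neg_one_lt_of_neg (by linarith) (by linarith)).le

lemma integral_cos_mul_genCauchy_of_le_one (hα : 0 < α) (hδ0 : 0 ≤ δ) (hδ1 : δ ≤ 1)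
    (hz : 0 < z) {t : ℕ} (ht : t ≤ 1) :
    ∫ r in Ioi 0, cos (r * z) * genCauchy α δ t r = 0 := by
  refine integral_undef fun hint => ?_
  have h := integrableOn_Ioi_of_integrableOn_cos_mul hz
    (antitoneOn_genCauchy hα.le hδ0 t.cast_nonneg)
    (fun r (hr : 0 < r) => (genCauchy_pos hα.le t.cast_nonneg hr.le).le) hint
  set a := max (π / (2 * z)) 1
  have hrpow : IntegrableOn (fun r : ℝ => r ^ (-δ)) (Ioi a) := by
    refine Integrable.mono' ((h.mono_set (Ioi_subset_Ioi (le_max_left _ _))).const_mul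
      (1 + α ^ (-δ))) (by fun_prop) ((ae_restrict_iff' measurableSet_Ioi).2
        (Eventually.of_forall fun r (hr : a < r) => ?_))
    have hr1 : 1 ≤ r := (le_max_right _ _).trans hr.le
    rw [Real.norm_eq_abs, abs_of_nonneg (by positivity), ← div_le_iff₀' (by positivity)]
    exact (rpow_neg_div_le_genCauchy_one hα hδ0 hr1).trans
      (genCauchy_one_le_of_le_one hα.le (by linarith) ht)
  linarith [(integrableOn_Ioi_rpow_iff (by positivity)).1 hrpow]

lemma abs_integral_cos_mul_genCauchy_le (hα : 0 < α) (hδ : 0 < δ) (hlam : 1 / δ < lam) :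
    |∫ r in Ioi 0, cos (r * z) * genCauchy α δ lam r| ≤
      Gamma (1 / δ) / δ * genCauchyMass α δ lam := by
  have hlam0 : 0 < lam := (one_div_pos.2 hδ).trans hlam
  rw [← integral_genCauchy hα hδ hlam, ← Real.norm_eq_abs]
  refine norm_integral_le_of_norm_le (integrableOn_genCauchy hα hδ hlam)
    ((ae_restrict_iff' measurableSet_Ioi).2 (Eventually.of_forall fun r (hr : 0 < r) => ?_))
  have hpos := genCauchy_pos (δ := δ) hα.le hlam0.le hr.le
  rw [norm_mul, Real.norm_eq_abs, Real.norm_eq_abs, abs_of_pos hpos]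
  exact mul_le_of_le_one_left hpos.le (abs_cos_le_one _)

lemma abs_integral_cos_mul_genCauchy_sub_le_of_le {μ : ℝ} (hα : 0 < α) (hδ0 : 0 < δ)
    (hδ1 : δ ≤ 1) (hlam : 1 / δ < lam) (hμ : lam ≤ μ) :
    |(∫ r in Ioi 0, cos (r * z) * genCauchy α δ μ r) -
        ∫ r in Ioi 0, cos (r * z) * genCauchy α δ lam r| ≤
      Gamma (1 / δ) / δ * (genCauchyMass α δ lam - genCauchyMass α δ μ) := by
  have hlam0 : 0 < lam := (one_div_pos.2 hδ0).trans hlam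
  have hle : genCauchy α δ μ ≤ᵐ[volume.restrict (Ioi 0)] genCauchy α δ lam :=
    (ae_restrict_iff' measurableSet_Ioi).2 (Eventually.of_forall fun r (hr : 0 < r) =>
      genCauchy_le_genCauchy_of_le hα hδ1 hr.le hlam0 hμ)
  rw [mul_sub, ← integral_genCauchy hα hδ0 hlam, ← integral_genCauchy hα hδ0 (hlam.trans_le hμ)]
  exact abs_integral_mul_sub_integral_mul_le (by fun_prop) (fun r => abs_cos_le_one _)
    (integrableOn_genCauchy hα hδ0 (hlam.trans_le hμ)) (integrableOn_genCauchy hα hδ0 hlam) hle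

lemma abs_integral_cos_mul_genCauchy_sub_le (hα : 0 < α) (hδ : δ ∈ Ioo (1 / 2) 1) (hz : 0 < z)
    {p q : ℕ} (hqp : q ≤ p) :
    |(∫ r in Ioi 0, cos (r * z) * genCauchy α δ p r) -
        ∫ r in Ioi 0, cos (r * z) * genCauchy α δ q r| ≤
      Gamma (1 / δ) / δ * |genCauchyMass α δ p - genCauchyMass α δ q| := by
  obtain ⟨hδ1, hδ2⟩ := hδ
  have hδ0 : 0 < δ := by linarith
  have hlt {t : ℕ} (ht : 2 ≤ t) : 1 / δ < t := by
    rw [div_lt_iff₀ hδ0]; nlinarith [show (2 : ℝ) ≤ t by exact_mod_cast ht]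
  have hzero {t : ℕ} (ht : t ≤ 1) := integral_cos_mul_genCauchy_of_le_one hα hδ0.le hδ2.le hz ht
  rcases le_or_gt 2 q with hq | hq
  · calc _ ≤ Gamma (1 / δ) / δ * (genCauchyMass α δ q - genCauchyMass α δ p) :=
          abs_integral_cos_mul_genCauchy_sub_le_of_le hα hδ0 hδ2.le (hlt hq) (by exact_mod_cast hqp)
      _ ≤ _ := by rw [abs_sub_comm]; gcongr; exact le_abs_self _
  rw [hzero (t := q) (by omega), sub_zero]
  rcases le_or_gt 2 p with hp | hp
  · calc _ ≤ Gamma (1 / δ) / δ * genCauchyMass α δ p :=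
          abs_integral_cos_mul_genCauchy_le hα hδ0 (hlt hp)
      _ ≤ _ := by
        gcongr
        linarith [le_abs_self (genCauchyMass α δ p - genCauchyMass α δ q),
          genCauchyMass_nonpos hα.le ⟨hδ1, hδ2⟩ (t := q) (by omega)]
  · rw [hzero (by omega), abs_zero]
    positivity

end GenCauchy

theorem cauchy_criterion_bound_general (d : ℕ) (hd : d = 1 ∨ d = 2) (α δ : ℝ) (hα : 0 < α)
    (hδ : δ ∈ Set.Ioo ((d : ℝ) / 2) 1) (lamseq : ℕ → ℕ) (m n : ℕ) :
    ∀ z : ℝ, 0 < z →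
      |cauchySD d α δ (lamseq m) z - cauchySD d α δ (lamseq n) z| ≤
        Real.Gamma ((d : ℝ) / δ) /
            (δ * π ^ ((d : ℝ) / 2) * 2 ^ ((d : ℝ) / 2 - 1) * Real.Gamma ((d : ℝ) / 2)) *
          |α ^ d * (lamseq m : ℝ) ^ ((d : ℝ) - (d : ℝ) / δ) *
              (Real.Gamma ((lamseq m : ℝ) - (d : ℝ) / δ) * (lamseq m : ℝ) ^ ((d : ℝ) / δ) /
                Real.Gamma (lamseq m : ℝ)) -
            α ^ d * (lamseq n : ℝ) ^ ((d : ℝ) - (d : ℝ) / δ) *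
              (Real.Gamma ((lamseq n : ℝ) - (d : ℝ) / δ) * (lamseq n : ℝ) ^ ((d : ℝ) / δ) /
                Real.Gamma (lamseq n : ℝ))| := by
  intro z hz
  obtain rfl : d = 1 := hd.resolve_right fun h => by subst h; norm_num at hδ
  have hδ' : δ ∈ Ioo (1 / 2) 1 := by simpa using hδ
  have hconst : Gamma (1 / δ) / (δ * π ^ ((1 : ℝ) / 2) * 2 ^ ((1 : ℝ) / 2 - 1) * Gamma (1 / 2)) =
      √2 / π * (Gamma (1 / δ) / δ) := by
    rw [Real.Gamma_one_half_eq, show (1 : ℝ) / 2 - 1 = -(1 / 2) by norm_num,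
      Real.rpow_neg zero_le_two, ← Real.sqrt_eq_rpow, ← Real.sqrt_eq_rpow]
    field_simp
    rw [Real.sq_sqrt Real.pi_pos.le]
  simp only [Nat.cast_one, pow_one]
  rw [hconst, cauchySD_one hz, cauchySD_one hz, ← mul_sub, abs_mul,
    abs_of_pos (by positivity : 0 < √2 / π), mul_assoc]
  refine mul_le_mul_of_nonneg_left ?_ (by positivity)
  change _ ≤ _ * |genCauchyMass α δ (lamseq m) - genCauchyMass α δ (lamseq n)|
  rcases le_total (lamseq n) (lamseq m) with h | h
  · exact abs_integral_cos_mul_genCauchy_sub_le hα hδ' hz h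
  · rw [abs_sub_comm, abs_sub_comm (genCauchyMass _ _ _)]
    exact abs_integral_cos_mul_genCauchy_sub_le hα hδ' hz h

theorem cauchy_criterion_bound (d : ℕ) (hd : d = 1 ∨ d = 2) (α δ : ℝ) (hα : 0 < α)
    (hδ : δ ∈ Set.Ioo ((d : ℝ) / 2) 1) (lamseq : ℕ → ℕ) (hmono : StrictMono lamseq)
    (htop : Tendsto lamseq atTop atTop) (m n : ℕ) :
    ∀ z : ℝ, 0 < z →
      |cauchySD d α δ (lamseq m) z - cauchySD d α δ (lamseq n) z| ≤
        Real.Gamma ((d : ℝ) / δ) /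
            (δ * π ^ ((d : ℝ) / 2) * 2 ^ ((d : ℝ) / 2 - 1) * Real.Gamma ((d : ℝ) / 2)) *
          |α ^ d * (lamseq m : ℝ) ^ ((d : ℝ) - (d : ℝ) / δ) *
              (Real.Gamma ((lamseq m : ℝ) - (d : ℝ) / δ) * (lamseq m : ℝ) ^ ((d : ℝ) / δ) /
                Real.Gamma (lamseq m : ℝ)) -
            α ^ d * (lamseq n : ℝ) ^ ((d : ℝ) - (d : ℝ) / δ) *
              (Real.Gamma ((lamseq n : ℝ) - (d : ℝ) / δ) * (lamseq n : ℝ) ^ ((d : ℝ) / δ) /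
                Real.Gamma (lamseq n : ℝ))| :=
  cauchy_criterion_bound_general d hd α δ hα hδ lamseq m n
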